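/- For all integers k ≥ 2, n ≥ 1, p ≥ 0, r ≥ 0, the images of c₂ and d₂ in G(k,n,p,r) commute and satisfy c₂^p = 1 and d₂^r = 1; consequently G(k,n,p,r) is an abelian group. (Final step in the proof of Lemma 3.3.) -/

import Mathlib

/-- Generators of the presentation: `a1, b1, a2, b2`, the tilde generators
`ct = c̃`, `dt = d̃`, and `c i`, `d i` for `i : Fin k`, where `c i` denotes
`c_{i+1}` (so `c ⟨0,_⟩ = c₁`, `c ⟨1,_⟩ = c₂`, …). -/
inductive Gen (k : ℕ) : Type
  | a1 | b1 | a2 | b2 | ct | dt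
  | c : Fin k → Gen k
  | d : Fin k → Gen k

namespace Gen

variable (k : ℕ)

def A1 : FreeGroup (Gen k) := FreeGroup.of Gen.a1
def B1 : FreeGroup (Gen k) := FreeGroup.of Gen.b1
def A2 : FreeGroup (Gen k) := FreeGroup.of Gen.a2
def B2 : FreeGroup (Gen k) := FreeGroup.of Gen.b2
def Ct : FreeGroup (Gen k) := FreeGroup.of Gen.ct
def Dt : FreeGroup (Gen k) := FreeGroup.of Gen.dt
def C (i : Fin k) : FreeGroup (Gen k) := FreeGroup.of (Gen.c i)
def D (i : Fin k) : FreeGroup (Gen k) := FreeGroup.of (Gen.d i)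

end Gen

open Gen commutatorElement in
/-- The relators of the presentation of `π₁(M)` from Lemma 3.2 (a relation
`w = v` is encoded as the relator `w * v⁻¹`). -/
def rels (k n p r : ℕ) : Set (FreeGroup (Gen k)) :=
  { x |
    -- a₂ = c̃⁻¹ a₁ c̃
    x = A2 k * ((Ct k)⁻¹ * A1 k * Ct k)⁻¹ ∨
    -- b₂ = c̃⁻¹ b₁ c̃
    x = B2 k * ((Ct k)⁻¹ * B1 k * Ct k)⁻¹ ∨
    -- b₁ = c̃⁻¹ b₂ c̃
    x = B1 k * ((Ct k)⁻¹ * B2 k * Ct k)⁻¹ ∨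
    -- [b₂, d̃] = 1
    x = ⁅B2 k, Dt k⁆ ∨
    -- [a₁⁻¹ b₁⁻¹ a₂, d̃] = 1
    x = ⁅(A1 k)⁻¹ * (B1 k)⁻¹ * A2 k, Dt k⁆ ∨
    -- [a₂⁻¹ b₂⁻¹ a₁, d̃] = 1
    x = ⁅(A2 k)⁻¹ * (B2 k)⁻¹ * A1 k, Dt k⁆ ∨
    -- c̃⁻¹ a₁ a₂ c̃ a₁⁻¹ a₂⁻¹ = d̃
    x = (Ct k)⁻¹ * A1 k * A2 k * Ct k * (A1 k)⁻¹ * (A2 k)⁻¹ * (Dt k)⁻¹ ∨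
    -- [a₁, d̃⁻¹] = c̃
    x = ⁅A1 k, (Dt k)⁻¹⁆ * (Ct k)⁻¹ ∨
    -- [b₁, d̃] = 1
    x = ⁅B1 k, Dt k⁆ ∨
    -- [a₁, b₁][a₂, b₂] = 1
    x = ⁅A1 k, B1 k⁆ * ⁅A2 k, B2 k⁆ ∨
    -- [c₁,d₁][c₂,d₂]⋯[c_k,d_k][c̃,d̃] = 1
    x = (List.ofFn fun i : Fin k => ⁅C k i, D k i⁆).prod * ⁅Ct k, Dt k⁆ ∨
    -- relations involving c₁, d₁  (index 0)
    (∃ i : Fin k, (i : ℕ) = 0 ∧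
      (x = ⁅(B1 k)⁻¹, (D k i)⁻¹⁆ * (A1 k)⁻¹ ∨      -- [b₁⁻¹,d₁⁻¹] = a₁
       x = ⁅(A1 k)⁻¹, D k i⁆ * (B1 k)⁻¹ ∨           -- [a₁⁻¹,d₁] = b₁
       x = ⁅(B2 k)⁻¹, (D k i)⁻¹⁆ * (C k i)⁻¹ ∨      -- [b₂⁻¹,d₁⁻¹] = c₁
       x = ⁅B2 k, (C k i)⁻¹⁆ ^ n * (D k i)⁻¹ ∨      -- [b₂,c₁⁻¹]ⁿ = d₁
       x = ⁅A1 k, C k i⁆ ∨ x = ⁅B1 k, C k i⁆ ∨      -- [a₁,c₁] = [b₁,c₁] = 1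
       x = ⁅A2 k, C k i⁆ ∨ x = ⁅A2 k, D k i⁆)) ∨    -- [a₂,c₁] = [a₂,d₁] = 1
    -- relations involving c₂, d₂  (index 1)
    (∃ i : Fin k, (i : ℕ) = 1 ∧
      (x = ⁅(B2 k)⁻¹, (D k i)⁻¹⁆ * ((C k i) ^ p)⁻¹ ∨  -- [b₂⁻¹,d₂⁻¹] = c₂ᵖ
       x = ⁅B2 k, (C k i)⁻¹⁆ * ((D k i) ^ r)⁻¹)) ∨    -- [b₂,c₂⁻¹] = d₂ʳ
    -- relations [b₂⁻¹,d_i⁻¹] = c_i, [b₂,c_i⁻¹] = d_i for 3 ≤ i ≤ k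
    (∃ i : Fin k, 2 ≤ (i : ℕ) ∧
      (x = ⁅(B2 k)⁻¹, (D k i)⁻¹⁆ * (C k i)⁻¹ ∨
       x = ⁅B2 k, (C k i)⁻¹⁆ * (D k i)⁻¹)) ∨
    -- commuting relations for 2 ≤ i ≤ k
    (∃ i : Fin k, 1 ≤ (i : ℕ) ∧
      (x = ⁅A2 k, C k i⁆ ∨ x = ⁅A2 k, D k i⁆ ∨
       x = ⁅A1 k, C k i⁆ ∨ x = ⁅B1 k, D k i⁆ ∨
       x = ⁅A1 k, D k i⁆ ∨ x = ⁅B1 k, C k i⁆)) }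

/-- The group `G(k,n,p,r)` of Lemma 3.2/3.3: the fundamental group of the
surgered manifold, given by the above presentation. -/
abbrev G (k n p r : ℕ) : Type := PresentedGroup (rels k n p r)

/-- The image in `G k n p r` of a generator. -/
abbrev gen (k n p r : ℕ) (g : Gen k) : G k n p r := PresentedGroup.of g

/-!
Conjugation by `c̃` swaps `b₁` and `b₂`. The relations involving `d̃`, together with
`a₁ d̃ a₁⁻¹ = d̃ c̃⁻¹`, show that `b₂ b₁` commutes with `c̃`, hence `b₁` and `b₂` commute.
Then `b₁` commutes with `c₁` and `b₂`, hence with `d₁ = [b₂, c₁⁻¹]ⁿ`, so `a₁ = [b₁⁻¹, d₁⁻¹] = 1`.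
The remaining relations successively kill `b₁, b₂, a₂, c̃, d̃`, and through `b₂ = 1` every
`c_i, d_i` with `i ≠ 2`, and they give `c₂ᵖ = d₂ʳ = 1`. The surface relation then collapses to
`[c₂, d₂] = 1`, so `G` is generated by two commuting elements.
-/

open commutatorElement

theorem List.prod_ofFn_eq_single {M : Type*} [Monoid M] {k : ℕ} (f : Fin k → M) (j : Fin k)
    (h : ∀ i, i ≠ j → f i = 1) : (List.ofFn f).prod = f j := by
  induction k with
  | zero => exact j.elim0
  | succ m ih =>
    rw [List.ofFn_succ, List.prod_cons]
    cases j using Fin.cases with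
    | zero =>
      rw [List.prod_eq_one, mul_one]
      simpa [List.mem_ofFn] using fun i => h i.succ (Fin.succ_ne_zero i)
    | succ j =>
      rw [h 0 (Fin.succ_ne_zero j).symm, one_mul]
      exact ih _ j fun i hi => h i.succ (Fin.succ_injective _ |>.ne hi)

section GroupFacts

variable {H : Type*} [Group H]

theorem Commute.of_conj_swap {x y g : H} (hx : g⁻¹ * x * g = y) (hy : g⁻¹ * y * g = x)
    (h : Commute (x * y) g) : Commute x y := by
  calc x * y = g⁻¹ * (x * y) * g := by rw [mul_assoc, h.eq, inv_mul_cancel_left]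
    _ = (g⁻¹ * x * g) * (g⁻¹ * y * g) := by group
    _ = y * x := by rw [hx, hy]

theorem mul_comm_of_commute_of_closure_eq_top {x y : H} (hxy : Commute x y)
    (hgen : Subgroup.closure {x, y} = ⊤) (a b : H) : a * b = b * a := by
  have hcomm : ∀ u ∈ ({x, y} : Set H), ∀ v ∈ ({x, y} : Set H), u * v = v * u := by
    rintro u (rfl | rfl) v (rfl | rfl)
    exacts [rfl, hxy.eq, hxy.symm.eq, rfl]
  have hle := Subgroup.closure_le_centralizer_centralizer ({x, y} : Set H)
  rw [hgen] at hle
  exact Set.centralizer_centralizer_comm_of_comm hcomm a (hle trivial) b (hle trivial)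

theorem Commute.commutatorElement_right {x a b : H} (ha : Commute x a) (hb : Commute x b) :
    Commute x ⁅a, b⁆ := by
  rw [commutatorElement_def]
  exact ((ha.mul_right hb).mul_right ha.inv_right).mul_right hb.inv_right

end GroupFacts

namespace G

open Gen

variable {k n p r : ℕ}

local notation "a₁" => gen k n p r Gen.a1
local notation "b₁" => gen k n p r Gen.b1
local notation "a₂" => gen k n p r Gen.a2
local notation "b₂" => gen k n p r Gen.b2
local notation "c̃" => gen k n p r Gen.ct
local notation "d̃" => gen k n p r Gen.dt

lemma ct_inv_mul_a1_mul_ct : c̃⁻¹ * a₁ * c̃ = a₂ := by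
  simp only [gen, PresentedGroup.of, ← map_mul, ← map_inv]
  exact (PresentedGroup.mk_eq_mk_of_mul_inv_mem (by grind [rels, A1, A2, Ct])).symm

lemma ct_inv_mul_b1_mul_ct : c̃⁻¹ * b₁ * c̃ = b₂ := by
  simp only [gen, PresentedGroup.of, ← map_mul, ← map_inv]
  exact (PresentedGroup.mk_eq_mk_of_mul_inv_mem (by grind [rels, B1, B2, Ct])).symm

lemma ct_inv_mul_b2_mul_ct : c̃⁻¹ * b₂ * c̃ = b₁ := by
  simp only [gen, PresentedGroup.of, ← map_mul, ← map_inv]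
  exact (PresentedGroup.mk_eq_mk_of_mul_inv_mem (by grind [rels, B1, B2, Ct])).symm

lemma commute_b1_dt : Commute b₁ d̃ := by
  rw [← commutatorElement_eq_one_iff_commute]
  simp only [gen, PresentedGroup.of, ← map_commutatorElement]
  exact PresentedGroup.one_of_mem (by grind [rels, B1, Dt])

lemma commute_b2_dt : Commute b₂ d̃ := by
  rw [← commutatorElement_eq_one_iff_commute]
  simp only [gen, PresentedGroup.of, ← map_commutatorElement]
  exact PresentedGroup.one_of_mem (by grind [rels, B2, Dt])

lemma commute_a1_inv_mul_b1_inv_mul_a2_dt : Commute (a₁⁻¹ * b₁⁻¹ * a₂) d̃ := by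
  rw [← commutatorElement_eq_one_iff_commute]
  simp only [gen, PresentedGroup.of, ← map_mul, ← map_inv, ← map_commutatorElement]
  exact PresentedGroup.one_of_mem (by grind [rels, A1, B1, A2, Dt])

lemma commute_a2_inv_mul_b2_inv_mul_a1_dt : Commute (a₂⁻¹ * b₂⁻¹ * a₁) d̃ := by
  rw [← commutatorElement_eq_one_iff_commute]
  simp only [gen, PresentedGroup.of, ← map_mul, ← map_inv, ← map_commutatorElement]
  exact PresentedGroup.one_of_mem (by grind [rels, A1, A2, B2, Dt])

lemma ct_inv_mul_a1_mul_a2_mul_ct_mul_a1_inv_mul_a2_inv :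
    c̃⁻¹ * a₁ * a₂ * c̃ * a₁⁻¹ * a₂⁻¹ = d̃ := by
  simp only [gen, PresentedGroup.of, ← map_mul, ← map_inv]
  exact PresentedGroup.mk_eq_mk_of_mul_inv_mem (by grind [rels, A1, A2, Ct, Dt])

lemma commutatorElement_a1_dt_inv : ⁅a₁, d̃⁻¹⁆ = c̃ := by
  simp only [gen, PresentedGroup.of, ← map_inv, ← map_commutatorElement]
  exact PresentedGroup.mk_eq_mk_of_mul_inv_mem (by grind [rels, A1, Ct, Dt])

lemma prod_commutatorElement_c_d_mul_commutatorElement_ct_dt :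
    (List.ofFn fun i => ⁅gen k n p r (.c i), gen k n p r (.d i)⁆).prod * ⁅c̃, d̃⁆ = 1 := by
  have h := PresentedGroup.one_of_mem (rels := rels k n p r)
    (x := (List.ofFn fun i => ⁅C k i, D k i⁆).prod * ⁅Ct k, Dt k⁆) (by grind [rels])
  simp only [map_mul, map_list_prod, List.map_ofFn, Function.comp_def, map_commutatorElement] at h
  exact h

variable {i : Fin k}

lemma commutatorElement_b1_inv_d_inv (hi : (i : ℕ) = 0) :
    ⁅b₁⁻¹, (gen k n p r (.d i))⁻¹⁆ = a₁ := by
  simp only [gen, PresentedGroup.of, ← map_inv, ← map_commutatorElement]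
  exact PresentedGroup.mk_eq_mk_of_mul_inv_mem (by grind [rels, A1, B1, D])

lemma commutatorElement_a1_inv_d (hi : (i : ℕ) = 0) : ⁅a₁⁻¹, gen k n p r (.d i)⁆ = b₁ := by
  simp only [gen, PresentedGroup.of, ← map_inv, ← map_commutatorElement]
  exact PresentedGroup.mk_eq_mk_of_mul_inv_mem (by grind [rels, A1, B1, D])

lemma commute_b1_c (hi : (i : ℕ) = 0) : Commute b₁ (gen k n p r (.c i)) := by
  rw [← commutatorElement_eq_one_iff_commute]
  simp only [gen, PresentedGroup.of, ← map_commutatorElement]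
  exact PresentedGroup.one_of_mem (by grind [rels, B1, C])

lemma commutatorElement_b2_c_inv_pow (hi : (i : ℕ) = 0) :
    ⁅b₂, (gen k n p r (.c i))⁻¹⁆ ^ n = gen k n p r (.d i) := by
  simp only [gen, PresentedGroup.of, ← map_inv, ← map_pow, ← map_commutatorElement]
  exact PresentedGroup.mk_eq_mk_of_mul_inv_mem (by grind [rels, B2, C, D])

lemma commutatorElement_b2_inv_d_inv (hi : (i : ℕ) ≠ 1) :
    ⁅b₂⁻¹, (gen k n p r (.d i))⁻¹⁆ = gen k n p r (.c i) := by
  simp only [gen, PresentedGroup.of, ← map_inv, ← map_commutatorElement]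
  exact PresentedGroup.mk_eq_mk_of_mul_inv_mem (by grind [rels, B2, C, D])

lemma commutatorElement_b2_c_inv (hi : 2 ≤ (i : ℕ)) :
    ⁅b₂, (gen k n p r (.c i))⁻¹⁆ = gen k n p r (.d i) := by
  simp only [gen, PresentedGroup.of, ← map_inv, ← map_commutatorElement]
  exact PresentedGroup.mk_eq_mk_of_mul_inv_mem (by grind [rels, B2, C, D])

lemma commutatorElement_b2_inv_d_inv_eq_pow (hi : (i : ℕ) = 1) :
    ⁅b₂⁻¹, (gen k n p r (.d i))⁻¹⁆ = gen k n p r (.c i) ^ p := by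
  simp only [gen, PresentedGroup.of, ← map_inv, ← map_pow, ← map_commutatorElement]
  exact PresentedGroup.mk_eq_mk_of_mul_inv_mem (by grind [rels, B2, C, D])

lemma commutatorElement_b2_c_inv_eq_pow (hi : (i : ℕ) = 1) :
    ⁅b₂, (gen k n p r (.c i))⁻¹⁆ = gen k n p r (.d i) ^ r := by
  simp only [gen, PresentedGroup.of, ← map_inv, ← map_pow, ← map_commutatorElement]
  exact PresentedGroup.mk_eq_mk_of_mul_inv_mem (by grind [rels, B2, C, D])

lemma a1_mul_dt_mul_a1_inv : a₁ * d̃ * a₁⁻¹ = d̃ * c̃⁻¹ := by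
  rw [← commutatorElement_a1_dt_inv, commutatorElement_def]
  group

lemma commute_b2_mul_b1_ct : Commute (b₂ * b₁) c̃ := by
  have hdt : Commute (b₂ * b₁) d̃ := commute_b2_dt.mul_left commute_b1_dt
  have hconj : Commute (a₁⁻¹ * (b₂ * b₁) * a₁) d̃ := by
    rw [← Commute.inv_left_iff,
      show (a₁⁻¹ * (b₂ * b₁) * a₁)⁻¹ = a₁⁻¹ * b₁⁻¹ * a₂ * (a₂⁻¹ * b₂⁻¹ * a₁) by group]
    exact commute_a1_inv_mul_b1_inv_mul_a2_dt.mul_left commute_a2_inv_mul_b2_inv_mul_a1_dt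
  have hdtct : Commute (b₂ * b₁) (d̃ * c̃⁻¹) := by
    have h := (Commute.conj_iff a₁).mpr hconj
    rwa [a1_mul_dt_mul_a1_inv, show a₁ * (a₁⁻¹ * (b₂ * b₁) * a₁) * a₁⁻¹ = b₂ * b₁ by group] at h
  simpa using (hdt.inv_right.mul_right hdtct).inv_right

lemma commute_b1_b2 : Commute b₁ b₂ :=
  (Commute.of_conj_swap ct_inv_mul_b2_mul_ct ct_inv_mul_b1_mul_ct commute_b2_mul_b1_ct).symm

lemma a1_eq_one (hk : 0 < k) : a₁ = 1 := by
  have hb1d : Commute b₁ (gen k n p r (.d ⟨0, hk⟩)) := by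
    rw [← commutatorElement_b2_c_inv_pow rfl]
    exact (commute_b1_b2.commutatorElement_right (commute_b1_c rfl).inv_right).pow_right n
  rw [← commutatorElement_b1_inv_d_inv (i := ⟨0, hk⟩) rfl]
  exact commutatorElement_eq_one_iff_commute.mpr hb1d.inv_left.inv_right

lemma b1_eq_one (hk : 0 < k) : b₁ = 1 := by
  rw [← commutatorElement_a1_inv_d (i := ⟨0, hk⟩) rfl, a1_eq_one hk, inv_one,
    commutatorElement_one_left]

lemma b2_eq_one (hk : 0 < k) : b₂ = 1 := by
  rw [← ct_inv_mul_b1_mul_ct, b1_eq_one hk, mul_one, inv_mul_cancel]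

lemma a2_eq_one (hk : 0 < k) : a₂ = 1 := by
  rw [← ct_inv_mul_a1_mul_ct, a1_eq_one hk, mul_one, inv_mul_cancel]

lemma ct_eq_one (hk : 0 < k) : c̃ = 1 := by
  rw [← commutatorElement_a1_dt_inv, a1_eq_one hk, commutatorElement_one_left]

lemma dt_eq_one (hk : 0 < k) : d̃ = 1 := by
  rw [← ct_inv_mul_a1_mul_a2_mul_ct_mul_a1_inv_mul_a2_inv, a1_eq_one hk, a2_eq_one hk,
    ct_eq_one hk]
  group

lemma c_eq_one (hi : (i : ℕ) ≠ 1) : gen k n p r (.c i) = 1 := by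
  rw [← commutatorElement_b2_inv_d_inv hi, b2_eq_one i.pos, inv_one, commutatorElement_one_left]

lemma d_eq_one (hi : (i : ℕ) ≠ 1) : gen k n p r (.d i) = 1 := by
  obtain h0 | h2 : (i : ℕ) = 0 ∨ 2 ≤ (i : ℕ) := by omega
  · rw [← commutatorElement_b2_c_inv_pow h0, b2_eq_one i.pos, commutatorElement_one_left, one_pow]
  · rw [← commutatorElement_b2_c_inv h2, b2_eq_one i.pos, commutatorElement_one_left]

lemma c_pow_eq_one (hi : (i : ℕ) = 1) : gen k n p r (.c i) ^ p = 1 := by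
  rw [← commutatorElement_b2_inv_d_inv_eq_pow hi, b2_eq_one i.pos, inv_one,
    commutatorElement_one_left]

lemma d_pow_eq_one (hi : (i : ℕ) = 1) : gen k n p r (.d i) ^ r = 1 := by
  rw [← commutatorElement_b2_c_inv_eq_pow hi, b2_eq_one i.pos, commutatorElement_one_left]

lemma commute_c_d (hi : (i : ℕ) = 1) : Commute (gen k n p r (.c i)) (gen k n p r (.d i)) := by
  have hprod := prod_commutatorElement_c_d_mul_commutatorElement_ct_dt (k := k) (n := n)
    (p := p) (r := r)
  rw [List.prod_ofFn_eq_single _ i fun j hj => ?_, ct_eq_one i.pos, commutatorElement_one_left,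
    mul_one] at hprod
  · exact commutatorElement_eq_one_iff_commute.mp hprod
  · rw [c_eq_one fun h => hj (Fin.ext (by omega)), commutatorElement_one_left]

lemma closure_c_d_eq_top (hi : (i : ℕ) = 1) :
    Subgroup.closure {gen k n p r (.c i), gen k n p r (.d i)} = ⊤ := by
  refine eq_top_iff.mpr fun x _ => PresentedGroup.generated_by _ _ (fun g => ?_) x
  have hk := i.pos
  cases g with
  | a1 => simp [a1_eq_one hk]
  | b1 => simp [b1_eq_one hk]
  | a2 => simp [a2_eq_one hk]
  | b2 => simp [b2_eq_one hk]
  | ct => simp [ct_eq_one hk]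
  | dt => simp [dt_eq_one hk]
  | c j =>
    obtain rfl | hj := eq_or_ne j i
    · exact Subgroup.subset_closure (Set.mem_insert _ _)
    · simp [c_eq_one (i := j) fun h => hj (Fin.ext (by omega))]
  | d j =>
    obtain rfl | hj := eq_or_ne j i
    · exact Subgroup.subset_closure (Set.mem_insert_of_mem _ rfl)
    · simp [d_eq_one (i := j) fun h => hj (Fin.ext (by omega))]

end G

/-- final step of the proof of Lemma 3.3: the images of
`c₂` and `d₂` in `G(k,n,p,r)` commute and satisfy `c₂ᵖ = 1` and `d₂ʳ = 1`;
consequently `G(k,n,p,r)` is abelian. -/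
theorem c2_d2_commute_and_torsion (k n p r : ℕ) (hk : 2 ≤ k) :
    Commute (gen k n p r (Gen.c ⟨1, by omega⟩)) (gen k n p r (Gen.d ⟨1, by omega⟩)) ∧
    (gen k n p r (Gen.c ⟨1, by omega⟩)) ^ p = 1 ∧
    (gen k n p r (Gen.d ⟨1, by omega⟩)) ^ r = 1 ∧
    ∀ x y : G k n p r, x * y = y * x := by
  have hi : ((⟨1, hk⟩ : Fin k) : ℕ) = 1 := rfl
  exact ⟨G.commute_c_d hi, G.c_pow_eq_one hi, G.d_pow_eq_one hi,
    mul_comm_of_commute_of_closure_eq_top (G.commute_c_d hi) (G.closure_c_d_eq_top hi)⟩
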